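/- For every positive integer n, E_{−n}^k(x) = E_n^k(−x) + (k/(n+k))·E_n^k(x). -/

import Mathlib

/-!
Write `F(x) = E_{-n}(x) - E_n(-x) - k/(n+k) E_n(x)`. The Cherednik operator satisfies the
Hecke-type relation `T(f ∘ s) = -(T f) ∘ s - 2k f` for the reflection `s x = -x`, and with this
relation the coefficient `k/(n+k)` is exactly the one making `F` an eigenfunction of `T` for the
eigenvalue `-(n+k)`. Moreover `F` is an exponential polynomial with exponents in `[-n, n]` and no
`e^{-nx}` term. Multiplying `T F = -(n+k) F` by `1 - e^{-2x}` and comparing coefficients of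
`e^{mx}` yields `(m+n+2k) a_m = (m+n+2) a_{m+2} + 2k a_{-m}`; descending from `|m| = n`, this
recurrence kills `a_{-m}` (at index `-m-2`) and then `a_m`, so `F = 0`.
-/

/-- The dominance-type partial order on `ℤ` used to define the non-symmetric
Heckman–Opdam polynomials of type `A₁`. -/
def hoOrd (j n : ℤ) : Prop := (|j| < |n| ∧ 2 ∣ (|n| - |j|)) ∨ (|j| = |n| ∧ n < j)

instance : ∀ j n : ℤ, Decidable (hoOrd j n) := fun j n => by unfold hoOrd; infer_instance

open Complex Finsupp

noncomputable def expPoly : (ℤ →₀ ℂ) →ₗ[ℂ] ℂ → ℂ :=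
  linearCombination ℂ fun j z => exp (j * z)

noncomputable def eulerOp : (ℤ →₀ ℂ) →ₗ[ℂ] (ℤ →₀ ℂ) where
  toFun a := (fun j : ℤ => (j : ℂ)) • a
  map_add' a b := by ext; simp [mul_add]
  map_smul' c a := by ext; simp [mul_left_comm]

@[simp] lemma eulerOp_apply (a : ℤ →₀ ℂ) (j : ℤ) : eulerOp a j = j * a j := rfl

lemma eulerOp_single (j : ℤ) (c : ℂ) : eulerOp (single j c) = single j (j * c) := by
  ext i; rw [eulerOp_apply, single_apply, single_apply]; split_ifs with h <;> simp [h]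

section expPoly

variable (a : ℤ →₀ ℂ) (z : ℂ)

lemma expPoly_apply :
    expPoly a z = ∑ j ∈ a.support, a j * exp (j * z) := by
  simp [expPoly, linearCombination_apply, Finsupp.sum]

lemma expPoly_single (j : ℤ) (c : ℂ) : expPoly (single j c) z = c * exp (j * z) := by
  simp [expPoly]

lemma expPoly_sum_single (s : Finset ℤ) (c : ℤ → ℂ) :
    expPoly (∑ j ∈ s, single j (c j)) z = ∑ j ∈ s, c j * exp (j * z) := by
  simp [map_sum, expPoly_single]

lemma expPoly_domLCongr_neg :
    expPoly (Finsupp.domLCongr (R := ℂ) (Equiv.neg ℤ) a) z = expPoly a (-z) := by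
  induction a using Finsupp.induction_linear with
  | zero => simp
  | add a b ha hb => simp only [map_add, Pi.add_apply, ha, hb]
  | single j c => simp [expPoly_single]

lemma expPoly_domLCongr_subRight_two :
    expPoly (Finsupp.domLCongr (R := ℂ) (Equiv.subRight (2 : ℤ)) a) z
      = exp (-2 * z) * expPoly a z := by
  induction a using Finsupp.induction_linear with
  | zero => simp
  | add a b ha hb => simp only [map_add, Pi.add_apply, ha, hb, mul_add]
  | single j c =>
    simp only [Finsupp.domLCongr_single, Equiv.subRight_apply, expPoly_single]
    rw [mul_left_comm, ← exp_add]
    push_cast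
    ring_nf

lemma hasDerivAt_expPoly : HasDerivAt (expPoly a) (expPoly (eulerOp a) z) z := by
  induction a using Finsupp.induction_linear with
  | zero => simpa [Pi.zero_def] using hasDerivAt_const z (0 : ℂ)
  | add a b ha hb => rw [map_add, map_add, map_add]; exact ha.add hb
  | single j c =>
    have hfun : expPoly (single j c) = fun z => c * exp (j * z) :=
      funext (expPoly_single · j c)
    rw [eulerOp_single, expPoly_single, hfun]
    refine (((hasDerivAt_id z).const_mul (j : ℂ)).cexp.const_mul c).congr_deriv ?_
    simp only [id]; ring

lemma differentiable_expPoly : Differentiable ℂ (expPoly a) :=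
  fun z => (hasDerivAt_expPoly a z).differentiableAt

end expPoly

theorem eq_zero_of_infinite_exp_image {a : ℤ →₀ ℂ}
    (h : (exp '' {z | expPoly a z = 0}).Infinite) : a = 0 := by
  set N : ℤ := ∑ j ∈ a.support, |j|
  have hN : ∀ j ∈ a.support, 0 ≤ j + N := fun j hj => by
    have := Finset.single_le_sum (f := fun j : ℤ => |j|) (fun i _ => abs_nonneg i) hj
    linarith [neg_abs_le j]
  -- `e^{Nz} · expPoly a z` is a polynomial in `e^z`
  set P : Polynomial ℂ := ∑ j ∈ a.support, Polynomial.monomial (j + N).toNat (a j)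
  have hP : P = 0 := by
    refine Polynomial.eq_zero_of_infinite_isRoot P (h.mono ?_)
    rintro _ ⟨z, hz, rfl⟩
    have : P.eval (exp z) = exp (N * z) * expPoly a z := by
      simp only [P, expPoly_apply, Polynomial.eval_finsetSum, Polynomial.eval_monomial,
        Finset.mul_sum]
      refine Finset.sum_congr rfl fun j hj => ?_
      rw [← exp_nat_mul, mul_left_comm, ← exp_add]
      congr 2
      rw [← Int.cast_natCast, Int.toNat_of_nonneg (hN j hj)]
      push_cast; ring
    simp only [Set.mem_ofPred_eq] at hz
    simp [Polynomial.IsRoot, this, hz]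
  ext j
  by_cases hj : j ∈ a.support
  · have hcoeff : P.coeff (j + N).toNat = a j := by
      simp only [P, Polynomial.finsetSum_coeff, Polynomial.coeff_monomial]
      refine (Finset.sum_eq_single_of_mem j hj fun i hi hij => if_neg ?_).trans (if_pos rfl)
      have := hN i hi; have := hN j hj; omega
    simp [← hcoeff, hP]
  · simpa using hj

lemma infinite_exp_image_setOf_exp_neg_two_mul_ne_one :
    (exp '' {z : ℂ | exp (-2 * z) ≠ 1}).Infinite := by
  refine ((Set.toFinite {0, 1, -1}).infinite_compl).mono fun w hw => ?_
  simp only [Set.mem_compl_iff, Set.mem_insert_iff, Set.mem_singleton_iff, not_or] at hw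
  obtain ⟨hw0, hw1, hw2⟩ := hw
  refine ⟨log w, ?_, exp_log hw0⟩
  have : exp (-2 * log w) = (w ^ 2)⁻¹ := by
    rw [neg_mul, exp_neg, show (2 : ℂ) * log w = (2 : ℕ) * log w by norm_num, exp_nat_mul,
      exp_log hw0]
  rw [Set.mem_ofPred_eq, this, inv_ne_one]
  intro hsq
  have : (w - 1) * (w + 1) = 0 := by linear_combination hsq
  rcases mul_eq_zero.1 this with h | h
  exacts [hw1 (sub_eq_zero.1 h), hw2 (eq_neg_of_add_eq_zero_left h)]

noncomputable def cherednik (k : ℂ) (f : ℂ → ℂ) (x : ℂ) : ℂ :=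
  deriv f x + 2 * k * (f x - f (-x)) / (1 - exp (-2 * x)) - k * f x

lemma exp_neg_two_mul_neg (x : ℂ) : exp (-2 * -x) = (exp (-2 * x))⁻¹ := by
  rw [← exp_neg]; ring_nf

section cherednik

variable (k : ℂ) {f g : ℂ → ℂ} {x : ℂ}

lemma cherednik_sub (hf : DifferentiableAt ℂ f x) (hg : DifferentiableAt ℂ g x) :
    cherednik k (fun y => f y - g y) x = cherednik k f x - cherednik k g x := by
  simp only [cherednik, deriv_fun_sub hf hg]
  ring

lemma cherednik_const_mul (c : ℂ) :
    cherednik k (fun y => c * f y) x = c * cherednik k f x := by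
  simp only [cherednik, deriv_const_mul_field']
  ring

lemma cherednik_comp_neg (hx : exp (-2 * x) ≠ 1) :
    cherednik k (fun y => f (-y)) x = -cherednik k f (-x) - 2 * k * f x := by
  have hp0 : exp (-2 * x) ≠ 0 := exp_ne_zero _
  have hp1 : 1 - exp (-2 * x) ≠ 0 := sub_ne_zero.2 hx.symm
  simp only [cherednik, deriv_comp_neg, neg_neg, exp_neg_two_mul_neg]
  generalize exp (-2 * x) = p at hp0 hp1 ⊢
  rw [show 1 - p⁻¹ = -(1 - p) / p by field_simp; ring]
  field_simp
  ring

theorem cherednik_sub_comp_neg_sub_of_eigen {ν : ℂ} (hν : ν ≠ 0)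
    (hf : Differentiable ℂ f) (hg : Differentiable ℂ g)
    (hfν : ∀ x, exp (-2 * x) ≠ 1 → cherednik k f x = -ν * f x)
    (hgν : ∀ x, exp (-2 * x) ≠ 1 → cherednik k g x = ν * g x) (hx : exp (-2 * x) ≠ 1) :
    cherednik k (fun y => f y - g (-y) - k / ν * g y) x
      = -ν * (f x - g (-x) - k / ν * g x) := by
  have hx' : exp (-2 * -x) ≠ 1 := by rwa [exp_neg_two_mul_neg, ne_eq, inv_eq_one]
  rw [cherednik_sub _ (by fun_prop) (by fun_prop), cherednik_const_mul,
    cherednik_sub _ (hf x) (by fun_prop), cherednik_comp_neg _ hx, hfν x hx, hgν x hx, hgν _ hx']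
  field_simp
  ring

end cherednik

theorem coeff_recurrence_of_cherednik_eq {k μ : ℂ} {a : ℤ →₀ ℂ}
    (h : ∀ x, exp (-2 * x) ≠ 1 → cherednik k (expPoly a) x = μ * expPoly a x) (m : ℤ) :
    (m + k - μ) * a m = (m + 2 - k - μ) * a (m + 2) + 2 * k * a (-m) := by
  set d := eulerOp a - (k + μ) • a
  set b := d - Finsupp.domLCongr (R := ℂ) (Equiv.subRight (2 : ℤ)) d
    + (2 * k) • (a - Finsupp.domLCongr (R := ℂ) (Equiv.neg ℤ) a)
  -- `expPoly b x = (1 - e^{-2x}) (cherednik k (expPoly a) x - μ expPoly a x)`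
  have hb : b = 0 := by
    refine eq_zero_of_infinite_exp_image
      (infinite_exp_image_setOf_exp_neg_two_mul_ne_one.mono (Set.image_mono fun x hx => ?_))
    have hx' := h x hx
    have hp : 1 - exp (-2 * x) ≠ 0 := sub_ne_zero.2 (Ne.symm hx)
    simp only [cherednik] at hx'
    simp only [Set.mem_ofPred_eq, b, d, map_add, map_sub, map_smul, Pi.add_apply, Pi.sub_apply,
      Pi.smul_apply, smul_eq_mul, expPoly_domLCongr_subRight_two, expPoly_domLCongr_neg,
      ← (hasDerivAt_expPoly a x).deriv]
    generalize exp (-2 * x) = p at hp hx' ⊢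
    field_simp at hx'
    linear_combination hx'
  have hbm := congrArg (· m) hb
  simp only [b, d, domLCongr_apply, domCongr_apply, coe_add, coe_sub, Finsupp.coe_smul,
    Pi.add_apply, Pi.sub_apply, eulerOp_apply, Pi.smul_apply, smul_eq_mul, equivMapDomain_apply,
    Equiv.subRight_symm_apply, Int.cast_add, Int.cast_ofNat, Equiv.neg_symm, Equiv.neg_apply,
    coe_zero, Pi.zero_apply] at hbm
  linear_combination hbm

theorem eq_zero_of_coeff_recurrence {k : ℝ} (hk : 0 ≤ k) {n : ℤ} (hn : 0 < n)
    {a : ℤ → ℂ} (hsupp : ∀ j, n < |j| → a j = 0) (hlow : a (-n) = 0)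
    (hrec : ∀ m : ℤ, (m + n + 2 * k) * a m = (m + n + 2) * a (m + 2) + 2 * k * a (-m)) :
    ∀ j, a j = 0 := by
  have pos_step : ∀ m : ℤ, 0 ≤ m → a (m + 2) = 0 → a (-m) = 0 → a m = 0 := by
    intro m hm h2 hneg
    have hpos : (0 : ℝ) < m + n + 2 * k := by
      have : (0 : ℝ) ≤ m := by exact_mod_cast hm
      have : (0 : ℝ) < n := by exact_mod_cast hn
      linarith
    have hne : ((m : ℂ) + n + 2 * k) ≠ 0 := by exact_mod_cast hpos.ne'
    simpa [h2, hneg, hne] using hrec m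
  have neg_step : ∀ m : ℤ, m < n → a (-m - 2) = 0 → a (m + 2) = 0 → a (-m) = 0 := by
    intro m hm h1 h2
    have hm' := hrec (-m - 2)
    rw [h1, show -m - 2 + 2 = -m by ring, show -(-m - 2) = m + 2 by ring, h2] at hm'
    have hne : ((n : ℂ) - m) ≠ 0 := by exact_mod_cast sub_ne_zero.2 hm.ne'
    have : ((n : ℂ) - m) * a (-m) = 0 := by push_cast at hm'; linear_combination -hm'
    exact (mul_eq_zero.1 this).resolve_left hne
  have vanish_outside : ∀ m ≤ n, ∀ j, m < |j| → a j = 0 := by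
    intro m hm
    induction m, hm using Int.leInductionDown with
    | base => exact hsupp
    | pred m hm ih =>
      intro j hj
      rcases lt_or_eq_of_le (show m ≤ |j| by omega) with hlt | heq
      · exact ih j hlt
      have hm0 : 0 ≤ m := heq ▸ abs_nonneg j
      have h2 : a (m + 2) = 0 := ih _ (by rw [abs_of_nonneg (by omega)]; omega)
      have hneg : a (-m) = 0 := by
        rcases hm.lt_or_eq with hlt | rfl
        · exact neg_step m hlt (ih _ (by rw [abs_of_nonpos (by omega)]; omega)) h2
        · exact hlow
      rcases abs_eq hm0 |>.1 heq.symm with rfl | rfl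
      exacts [pos_step j hm0 h2 hneg, hneg]
  exact fun j => vanish_outside (-1) (by omega) j (by linarith [abs_nonneg j])

theorem eq_zero_of_cherednik_eq_neg {k : ℝ} (hk : 0 ≤ k) {n : ℤ} (hn : 0 < n)
    {a : ℤ →₀ ℂ} (hsupp : ∀ j, n < |j| → a j = 0) (hlow : a (-n) = 0)
    (h : ∀ x, exp (-2 * x) ≠ 1 → cherednik k (expPoly a) x = -(n + k) * expPoly a x) :
    a = 0 :=
  Finsupp.ext <| eq_zero_of_coeff_recurrence hk hn hsupp hlow fun m => by
    linear_combination coeff_recurrence_of_cherednik_eq h m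

lemma abs_le_abs_of_hoOrd {j n : ℤ} (h : hoOrd j n) : |j| ≤ |n| := by
  rcases h with ⟨h, _⟩ | ⟨h, _⟩ <;> omega

lemma not_hoOrd_self (n : ℤ) : ¬ hoOrd n n := by
  unfold hoOrd; omega

noncomputable def hoCoeff (c : ℤ → ℤ → ℂ) (n : ℤ) : ℤ →₀ ℂ :=
  single n 1 + ∑ j ∈ (Finset.Icc (-|n|) |n|).filter (fun j => hoOrd j n), single j (c n j)

section hoCoeff

variable (c : ℤ → ℤ → ℂ) {n j : ℤ}

lemma expPoly_hoCoeff (z : ℂ) :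
    expPoly (hoCoeff c n) z = exp (n * z) +
      ∑ j ∈ (Finset.Icc (-|n|) |n|).filter (fun j => hoOrd j n), c n j * exp (j * z) := by
  rw [hoCoeff, map_add, Pi.add_apply, expPoly_single, one_mul, expPoly_sum_single]

lemma hoCoeff_apply_of_ne (hjn : j ≠ n) (hj : ¬ hoOrd j n) : hoCoeff c n j = 0 := by
  simp [hoCoeff, single_apply, hjn.symm, hj]

lemma hoCoeff_apply_of_abs_lt (h : |n| < |j|) : hoCoeff c n j = 0 :=
  hoCoeff_apply_of_ne c (by rintro rfl; exact h.false)
    fun hj => (abs_le_abs_of_hoOrd hj).not_gt h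

lemma hoCoeff_apply_self : hoCoeff c n n = 1 := by
  simp [hoCoeff, single_apply, not_hoOrd_self]

lemma hoCoeff_neg_sub_sub_apply_of_abs_lt (t : ℂ) (h : |n| < |j|) :
    (hoCoeff c (-n) - Finsupp.domLCongr (R := ℂ) (Equiv.neg ℤ) (hoCoeff c n)
      - t • hoCoeff c n) j = 0 := by
  simp [hoCoeff_apply_of_abs_lt, h]

lemma hoCoeff_neg_sub_sub_apply_neg (hn : 0 < n) (t : ℂ) :
    (hoCoeff c (-n) - Finsupp.domLCongr (R := ℂ) (Equiv.neg ℤ) (hoCoeff c n)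
      - t • hoCoeff c n) (-n) = 0 := by
  have hord : ¬ hoOrd (-n) n := by unfold hoOrd; rw [abs_neg]; omega
  simp [hoCoeff_apply_self, hoCoeff_apply_of_ne c (by omega : -n ≠ n) hord]

end hoCoeff

theorem stmt2 (k : ℝ) (hk : 0 ≤ k) (E : ℤ → ℂ → ℂ) (c : ℤ → ℤ → ℂ)
    (hform : ∀ (n : ℤ) (z : ℂ), E n z = Complex.exp ((n : ℂ) * z) +
      ∑ j ∈ (Finset.Icc (-|n|) |n|).filter (fun j => hoOrd j n),
        c n j * Complex.exp ((j : ℂ) * z))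
    (heig : ∀ (n : ℤ) (x : ℂ), Complex.exp (-2 * x) ≠ 1 →
      deriv (E n) x + 2 * (k : ℂ) * (E n x - E n (-x)) / (1 - Complex.exp (-2 * x))
          - (k : ℂ) * E n x
        = (if 0 < n then (n : ℂ) + (k : ℂ) else (n : ℂ) - (k : ℂ)) * E n x) :
    ∀ n : ℤ, 1 ≤ n → ∀ x : ℂ,
      E (-n) x = E n (-x) + ((k : ℂ) / ((n : ℂ) + (k : ℂ))) * E n x := by
  intro n hn x
  have hn0 : 0 < n := hn
  have hν : (n : ℂ) + k ≠ 0 := by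
    exact_mod_cast (add_pos_of_pos_of_nonneg (Int.cast_pos.2 hn0) hk).ne'
  have hE : ∀ m, E m = expPoly (hoCoeff c m) := fun m => funext fun z => by
    rw [hform, expPoly_hoCoeff]
  have hT : ∀ m y, exp (-2 * y) ≠ 1 →
      cherednik k (E m) y = (if 0 < m then (m : ℂ) + k else (m : ℂ) - k) * E m y := heig
  have hdiff : ∀ m, Differentiable ℂ (E m) := fun m => hE m ▸ differentiable_expPoly _
  set a := hoCoeff c (-n) - Finsupp.domLCongr (R := ℂ) (Equiv.neg ℤ) (hoCoeff c n)
    - ((k : ℂ) / (n + k)) • hoCoeff c n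
  have hF : expPoly a = fun y => E (-n) y - E n (-y) - k / (n + k) * E n y := by
    funext y
    simp only [a, map_sub, map_smul, Pi.sub_apply, Pi.smul_apply, smul_eq_mul,
      expPoly_domLCongr_neg, hE]
  have ha : a = 0 := by
    refine eq_zero_of_cherednik_eq_neg hk hn0
      (fun j hj => hoCoeff_neg_sub_sub_apply_of_abs_lt c _ (by rwa [abs_of_pos hn0]))
      (hoCoeff_neg_sub_sub_apply_neg c hn0 _) fun y hy => ?_
    rw [hF]
    refine cherednik_sub_comp_neg_sub_of_eigen _ hν (hdiff _) (hdiff _) (fun z hz => ?_)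
      (fun z hz => ?_) hy
    · rw [hT _ _ hz, if_neg (by omega)]; push_cast; ring
    · rw [hT _ _ hz, if_pos hn0]
  have hFx := congrFun hF x
  rw [ha, map_zero, Pi.zero_apply] at hFx
  linear_combination -hFx
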